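/- Let β be a totally real cubic Perron number whose Galois conjugates α and γ satisfy 1 < |α| ≤ |γ| < β. Then β^n is not a Parry number for any integer n ≥ 1, i.e. β has Parry order 0. -/

import Mathlib

/-- The β-transformation `x ↦ βx - ⌊βx⌋`. -/
noncomputable def betaT (β : ℝ) (x : ℝ) : ℝ := β * x - ⌊β * x⌋

/-- `β` is a Parry number: `β > 1` and the forward orbit of `1` under the
β-transformation is finite. -/
def IsParry (β : ℝ) : Prop :=
  1 < β ∧ Set.Finite {x : ℝ | ∃ n : ℕ, 1 ≤ n ∧ (betaT β)^[n] 1 = x}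

/-- `β` is a simple Parry number: Parry, and the orbit of `1` hits `0`. -/
def IsSimpleParry (β : ℝ) : Prop :=
  IsParry β ∧ ∃ n : ℕ, 1 ≤ n ∧ (betaT β)^[n] 1 = 0

/-- `β` is a Perron number: a real algebraic integer `β > 1` all of whose Galois
conjugates other than `β` itself have complex absolute value `< β`. -/
def IsPerron (β : ℝ) : Prop :=
  1 < β ∧ IsIntegral ℤ β ∧
    ∀ z : ℂ, Polynomial.aeval z (minpoly ℚ β) = 0 → z ≠ (β : ℂ) → ‖z‖ < β

/-- `β` is a Pisot number. -/
def IsPisot (β : ℝ) : Prop :=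
  1 < β ∧ IsIntegral ℤ β ∧
    ∀ z : ℂ, Polynomial.aeval z (minpoly ℚ β) = 0 → z ≠ (β : ℂ) → ‖z‖ < 1

/-- `β` is a Salem number. -/
def IsSalem (β : ℝ) : Prop :=
  1 < β ∧ IsIntegral ℤ β ∧
    (∀ z : ℂ, Polynomial.aeval z (minpoly ℚ β) = 0 → z ≠ (β : ℂ) → ‖z‖ ≤ 1) ∧
    (∃ z : ℂ, Polynomial.aeval z (minpoly ℚ β) = 0 ∧ ‖z‖ = 1)

/-- `β` has Parry order exactly `n`: if `n ≥ 1` then `β ^ n` is Parry, and no higher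
power of `β` is Parry. -/
def HasParryOrder (β : ℝ) (n : ℕ) : Prop :=
  (1 ≤ n → IsParry (β ^ n)) ∧ ∀ k : ℕ, n < k → ¬ IsParry (β ^ k)

/-- Mahler measure of an algebraic number `β`: product of `max 1 |α|` over the complex
roots `α` of the minimal polynomial of `β` over `ℚ`. -/
noncomputable def mahlerMeasureOf (β : ℝ) : ℝ :=
  (((minpoly ℚ β).map (algebraMap ℚ ℂ)).roots.map (fun z => max 1 (‖z‖))).prod

/-!
By Boyd's criterion it is enough to show that the norm of `β ^ n` exceeds `β ^ n` in absolute
value. The criterion itself: if `T^(m+p) 1 = T^m 1`, then `β` is a root of an integer polynomial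
`P` built from the digits of `1`, whose coefficients below degree `m` are differences of digits,
hence of absolute value at most `β`, and not all zero, since `1 ∉ [0, 1)` rules out a purely
periodic digit sequence. The minimal polynomial divides `P`, so its constant term divides the
trailing coefficient of `P`.

For the norm: the conjugates `β ^ n, α ^ n, γ ^ n` are distinct, because `|α| = |γ|` would force
`α = -γ`, and then `β` would equal its trace, a rational number. Hence
`|N(β ^ n)| = β ^ n |α| ^ n |γ| ^ n > β ^ n`.
-/

open Polynomial IntermediateField

/-- `digitPoly d n = X ^ n - d 0 X ^ (n - 1) - ⋯ - d (n - 1)`. -/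
noncomputable def digitPoly (d : ℕ → ℤ) : ℕ → ℤ[X]
  | 0 => 1
  | n + 1 => X * digitPoly d n - C (d n)

theorem coeff_digitPoly_of_lt (d : ℕ → ℤ) {n k : ℕ} (hk : k < n) :
    (digitPoly d n).coeff k = -d (n - 1 - k) := by
  induction n generalizing k with
  | zero => omega
  | succ n ih =>
    cases k with
    | zero => simp [digitPoly]
    | succ k =>
      rw [digitPoly, coeff_sub, coeff_C, if_neg k.succ_ne_zero, sub_zero, coeff_X_mul,
        ih (by omega), show n - 1 - k = n + 1 - 1 - (k + 1) by omega]

theorem aeval_digitPoly {R : Type*} [CommRing R] (x : R) (t : ℕ → R) (d : ℕ → ℤ)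
    (h0 : t 0 = 1) (hsucc : ∀ n, t (n + 1) = x * t n - d n) (n : ℕ) :
    aeval x (digitPoly d n) = t n := by
  induction n with
  | zero => simp [digitPoly, h0]
  | succ n ih => simp [digitPoly, ih, hsucc n]

noncomputable def betaOrbit (β : ℝ) (n : ℕ) : ℝ := (betaT β)^[n] 1

noncomputable def betaDigit (β : ℝ) (n : ℕ) : ℤ := ⌊β * betaOrbit β n⌋

section BetaExpansion

variable {β : ℝ} {m n p : ℕ}

theorem betaOrbit_zero (β : ℝ) : betaOrbit β 0 = 1 := rfl

theorem betaOrbit_succ (β : ℝ) (n : ℕ) :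
    betaOrbit β (n + 1) = Int.fract (β * betaOrbit β n) :=
  Function.iterate_succ_apply' _ n 1

theorem betaOrbit_succ_eq_sub (β : ℝ) (n : ℕ) :
    betaOrbit β (n + 1) = β * betaOrbit β n - betaDigit β n :=
  betaOrbit_succ β n

theorem betaOrbit_nonneg (β : ℝ) (n : ℕ) : 0 ≤ betaOrbit β n := by
  cases n with
  | zero => simp [betaOrbit_zero]
  | succ n => exact betaOrbit_succ β n ▸ Int.fract_nonneg _

theorem betaOrbit_succ_lt_one (β : ℝ) (n : ℕ) : betaOrbit β (n + 1) < 1 :=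
  betaOrbit_succ β n ▸ Int.fract_lt_one _

theorem betaOrbit_le_one (β : ℝ) (n : ℕ) : betaOrbit β n ≤ 1 := by
  cases n with
  | zero => simp [betaOrbit_zero]
  | succ n => exact (betaOrbit_succ_lt_one β n).le

theorem betaDigit_nonneg (hβ : 0 ≤ β) (n : ℕ) : 0 ≤ betaDigit β n :=
  Int.floor_nonneg.2 (mul_nonneg hβ (betaOrbit_nonneg β n))

theorem betaDigit_le (hβ : 0 ≤ β) (n : ℕ) : (betaDigit β n : ℝ) ≤ β :=
  (Int.floor_le _).trans (mul_le_of_le_one_right hβ (betaOrbit_le_one β n))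

theorem IsParry.exists_betaOrbit_add_eq (h : IsParry β) :
    ∃ m p, 1 ≤ p ∧ betaOrbit β (m + p) = betaOrbit β m := by
  have hmaps : Set.MapsTo (fun n ↦ betaOrbit β (n + 1)) Set.univ
      {x | ∃ n, 1 ≤ n ∧ (betaT β)^[n] 1 = x} := fun n _ ↦ ⟨n + 1, by omega, rfl⟩
  obtain ⟨a, -, b, -, hab, heq⟩ := Set.infinite_univ.exists_ne_map_eq_of_mapsTo hmaps h.2
  rcases hab.lt_or_gt with hlt | hlt
  · exact ⟨a + 1, b - a, by omega, by rw [show a + 1 + (b - a) = b + 1 by omega]; exact heq.symm⟩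
  · exact ⟨b + 1, a - b, by omega, by rw [show b + 1 + (a - b) = a + 1 by omega]; exact heq⟩

theorem betaOrbit_add_sub_eq (hd : ∀ j < n, betaDigit β (j + p) = betaDigit β j) :
    betaOrbit β (n + p) - betaOrbit β n = β ^ n * (betaOrbit β p - 1) := by
  induction n with
  | zero => simp [betaOrbit_zero]
  | succ n ih =>
    rw [show n + 1 + p = n + p + 1 by omega, betaOrbit_succ_eq_sub, betaOrbit_succ_eq_sub,
      hd n n.lt_succ_self, pow_succ]
    linear_combination β * ih fun j hj ↦ hd j (by omega)

/-- Since `1` is not in the range `[0, 1)` of `T_β`, the digits of a periodic orbit of `1` are not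
purely periodic. -/
theorem exists_betaDigit_add_ne (hβ : 0 < β) (hp : 1 ≤ p)
    (h : betaOrbit β (m + p) = betaOrbit β m) :
    ∃ j < m, betaDigit β (j + p) ≠ betaDigit β j := by
  by_contra! hd
  have hgap := betaOrbit_add_sub_eq hd
  rw [h, sub_self] at hgap
  have hlt : betaOrbit β p < 1 := by
    obtain ⟨q, rfl⟩ := Nat.exists_eq_add_of_le' hp
    exact betaOrbit_succ_lt_one β q
  nlinarith [pow_pos hβ m]

noncomputable def parryPoly (β : ℝ) (m p : ℕ) : ℤ[X] :=
  digitPoly (betaDigit β) (m + p) - digitPoly (betaDigit β) m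

theorem aeval_parryPoly (β : ℝ) (m p : ℕ) :
    aeval β (parryPoly β m p) = betaOrbit β (m + p) - betaOrbit β m := by
  simp only [parryPoly, map_sub,
    aeval_digitPoly β _ _ (betaOrbit_zero β) (betaOrbit_succ_eq_sub β)]

theorem coeff_parryPoly_of_lt {k : ℕ} (hk : k < m) :
    (parryPoly β m p).coeff k = betaDigit β (m - 1 - k) - betaDigit β (m + p - 1 - k) := by
  rw [parryPoly, coeff_sub, coeff_digitPoly_of_lt _ (by omega), coeff_digitPoly_of_lt _ hk]
  ring

theorem abs_coeff_parryPoly_le (hβ : 0 ≤ β) {k : ℕ} (hk : k < m) :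
    |((parryPoly β m p).coeff k : ℝ)| ≤ β := by
  rw [coeff_parryPoly_of_lt hk, Int.cast_sub, abs_le]
  have := betaDigit_le hβ (m - 1 - k)
  have := betaDigit_le hβ (m + p - 1 - k)
  have : (0 : ℝ) ≤ betaDigit β (m - 1 - k) := by exact_mod_cast betaDigit_nonneg hβ _
  have : (0 : ℝ) ≤ betaDigit β (m + p - 1 - k) := by exact_mod_cast betaDigit_nonneg hβ _
  constructor <;> linarith

theorem exists_coeff_parryPoly_ne_zero (hβ : 0 < β) (hp : 1 ≤ p)
    (h : betaOrbit β (m + p) = betaOrbit β m) :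
    ∃ k < m, (parryPoly β m p).coeff k ≠ 0 := by
  obtain ⟨j, hjm, hj⟩ := exists_betaDigit_add_ne hβ hp h
  refine ⟨m - 1 - j, by omega, ?_⟩
  rw [coeff_parryPoly_of_lt (by omega), show m - 1 - (m - 1 - j) = j by omega,
    show m + p - 1 - (m - 1 - j) = j + p by omega]
  omega

end BetaExpansion

theorem Polynomial.abs_coeff_zero_le_abs_trailingCoeff {f g : ℤ[X]} (hfg : f ∣ g) (hg : g ≠ 0) :
    |f.coeff 0| ≤ |g.trailingCoeff| := by
  by_cases h0 : f.coeff 0 = 0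
  · simp [h0]
  obtain ⟨q, rfl⟩ := hfg
  have hf : f.trailingCoeff = f.coeff 0 := by
    rw [trailingCoeff, Nat.le_zero.1 (natTrailingDegree_le_of_ne_zero h0)]
  rw [trailingCoeff_mul, hf, abs_mul]
  exact le_mul_of_one_le_right (abs_nonneg _)
    (Int.one_le_abs (mt trailingCoeff_eq_zero.1 (right_ne_zero_of_mul hg)))

theorem not_isParry_of_lt_abs_coeff_zero {β : ℝ} (hint : IsIntegral ℤ β)
    (h : β < |((minpoly ℤ β).coeff 0 : ℝ)|) : ¬ IsParry β := by
  intro hparry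
  have hβ : 0 < β := zero_lt_one.trans hparry.1
  obtain ⟨m, p, hp, hper⟩ := hparry.exists_betaOrbit_add_eq
  obtain ⟨k, hkm, hk⟩ := exists_coeff_parryPoly_ne_zero hβ hp hper
  have hP : parryPoly β m p ≠ 0 := fun h ↦ hk (by rw [h, coeff_zero])
  have hdvd : minpoly ℤ β ∣ parryPoly β m p :=
    minpoly.isIntegrallyClosed_dvd hint (by rw [aeval_parryPoly, hper, sub_self])
  have htrail : |((parryPoly β m p).trailingCoeff : ℝ)| ≤ β :=
    abs_coeff_parryPoly_le hβ.le ((natTrailingDegree_le_of_ne_zero hk).trans_lt hkm)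
  have hle : |((minpoly ℤ β).coeff 0 : ℝ)| ≤ |((parryPoly β m p).trailingCoeff : ℝ)| := by
    exact_mod_cast abs_coeff_zero_le_abs_trailingCoeff hdvd hP
  linarith

theorem Polynomial.Monic.eq_X_sub_C_mul_X_sub_C_mul_X_sub_C {K : Type*} [Field K] {f : K[X]}
    (hf : f.Monic) (hdeg : f.natDegree ≤ 3) {a b c : K} (hab : a ≠ b) (hac : a ≠ c)
    (hbc : b ≠ c) (ha : f.IsRoot a) (hb : f.IsRoot b) (hc : f.IsRoot c) :
    f = (X - C a) * (X - C b) * (X - C c) := by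
  have hcop (x y : K) (hxy : x ≠ y) : IsCoprime (X - C x) (X - C y) :=
    isCoprime_X_sub_C_of_isUnit_sub (sub_ne_zero.2 hxy).isUnit
  have hdvd : (X - C a) * (X - C b) * (X - C c) ∣ f :=
    ((hcop a c hac).mul_left (hcop b c hbc)).mul_dvd
      ((hcop a b hab).mul_dvd (dvd_iff_isRoot.2 ha) (dvd_iff_isRoot.2 hb)) (dvd_iff_isRoot.2 hc)
  have hmonic : ((X - C a) * (X - C b) * (X - C c)).Monic :=
    ((monic_X_sub_C a).mul (monic_X_sub_C b)).mul (monic_X_sub_C c)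
  refine eq_of_monic_of_dvd_of_natDegree_le hmonic hf hdvd (hdeg.trans_eq ?_)
  rw [natDegree_mul ((monic_X_sub_C a).mul (monic_X_sub_C b)) (monic_X_sub_C c),
    natDegree_mul (monic_X_sub_C a) (monic_X_sub_C b)]
  simp

theorem Polynomial.coeff_two_X_sub_C_mul_X_sub_C_mul_X_sub_C {R : Type*} [CommRing R]
    (a b c : R) : ((X - C a) * (X - C b) * (X - C c)).coeff 2 = -(a + b + c) := by
  have : (X - C a) * (X - C b) * (X - C c) =
      X ^ 3 - C (a + b + c) * X ^ 2 + C (a * b + a * c + b * c) * X - C (a * b * c) := by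
    simp only [C_add, C_mul]
    ring
  rw [this, coeff_sub, coeff_add, coeff_sub, coeff_C_mul_X_pow, coeff_C_mul_X, coeff_X_pow,
    coeff_C]
  simp

theorem Polynomial.coeff_zero_X_sub_C_mul_X_sub_C_mul_X_sub_C {R : Type*} [CommRing R]
    (a b c : R) : ((X - C a) * (X - C b) * (X - C c)).coeff 0 = -(a * b * c) := by
  simp [coeff_zero_eq_eval_zero]

section Minpoly

variable {K L : Type*} [Field K] [Field L] [Algebra K L]

theorem minpoly.natDegree_le_of_mem_adjoin {x y : L} (hx : IsIntegral K x) (hy : y ∈ K⟮x⟯) :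
    (minpoly K y).natDegree ≤ (minpoly K x).natDegree := by
  have := adjoin.finiteDimensional hx
  rw [← adjoin.finrank hx, ← IntermediateField.minpoly_eq (⟨y, hy⟩ : K⟮x⟯)]
  exact minpoly.natDegree_le _

theorem minpoly.aeval_pow_eq_zero {A : Type*} [CommRing A] [Algebra K A] {x : L} {a : A}
    (ha : Polynomial.aeval a (minpoly K x) = 0) (n : ℕ) :
    Polynomial.aeval (a ^ n) (minpoly K (x ^ n)) = 0 := by
  obtain ⟨q, hq⟩ : minpoly K x ∣ (minpoly K (x ^ n)).comp (X ^ n) :=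
    minpoly.dvd K x (by simp [aeval_comp])
  have := congrArg (Polynomial.aeval a) hq
  simpa [aeval_comp, ha] using this

theorem minpoly.map_pow_eq_X_sub_C_mul_X_sub_C_mul_X_sub_C {x a b : L} (hx : IsIntegral K x)
    (hdeg : (minpoly K x).natDegree ≤ 3) (ha : Polynomial.aeval a (minpoly K x) = 0)
    (hb : Polynomial.aeval b (minpoly K x) = 0) {n : ℕ} (hxa : x ^ n ≠ a ^ n) (hxb : x ^ n ≠ b ^ n)
    (hab : a ^ n ≠ b ^ n) :
    (minpoly K (x ^ n)).map (algebraMap K L) =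
      (X - C (x ^ n)) * (X - C (a ^ n)) * (X - C (b ^ n)) := by
  have hroot {y : L} (hy : Polynomial.aeval y (minpoly K (x ^ n)) = 0) :
      ((minpoly K (x ^ n)).map (algebraMap K L)).IsRoot y := by
    rwa [IsRoot, eval_map_algebraMap]
  refine ((minpoly.monic (hx.pow n)).map _).eq_X_sub_C_mul_X_sub_C_mul_X_sub_C ?_ hxa hxb hab
    (hroot (minpoly.aeval K _)) (hroot (minpoly.aeval_pow_eq_zero ha n))
    (hroot (minpoly.aeval_pow_eq_zero hb n))
  rw [natDegree_map]
  exact (minpoly.natDegree_le_of_mem_adjoin hx (pow_mem (mem_adjoin_simple_self K x) n)).trans hdeg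

theorem minpoly.natDegree_eq_one_of_map_eq {x a : L}
    (h : (minpoly K x).map (algebraMap K L) = (X - C x) * (X - C (-a)) * (X - C a)) :
    (minpoly K x).natDegree = 1 := by
  have hx : x = algebraMap K L (-(minpoly K x).coeff 2) := by
    rw [map_neg, ← coeff_map, h, coeff_two_X_sub_C_mul_X_sub_C_mul_X_sub_C]
    ring
  rw [hx, minpoly.eq_X_sub_C, natDegree_X_sub_C]

end Minpoly

theorem intCast_coeff_minpoly {L : Type*} [Field L] [CharZero L] {x : L} (hx : IsIntegral ℤ x)
    (k : ℕ) : (((minpoly ℤ x).coeff k : ℤ) : L) = algebraMap ℚ L ((minpoly ℚ x).coeff k) := by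
  rw [minpoly.isIntegrallyClosed_eq_field_fractions' ℚ hx, coeff_map]
  simp

theorem pow_ne_pow_of_abs_lt {a b : ℝ} (hab : |a| < |b|) {n : ℕ} (hn : n ≠ 0) : a ^ n ≠ b ^ n :=
  fun h ↦ (pow_lt_pow_left₀ hab (abs_nonneg a) hn).ne (by rw [← abs_pow, ← abs_pow, h])

/-- A totally real cubic Perron number whose conjugates satisfy
`1 < |α| ≤ |γ| < β` has no Parry positive power. -/
theorem totally_real_cubic_case_four (β : ℝ) (hβ : IsPerron β)
    (hdeg : (minpoly ℚ β).natDegree = 3)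
    (α γ : ℝ)
    (hαroot : Polynomial.aeval α (minpoly ℚ β) = 0)
    (hγroot : Polynomial.aeval γ (minpoly ℚ β) = 0)
    (hαγ : α ≠ γ)
    (h1 : 1 < |α|) (h2 : |α| ≤ |γ|) (h3 : |γ| < β) :
    ∀ n : ℕ, 1 ≤ n → ¬ IsParry (β ^ n) := by
  obtain ⟨hβ1, hβint, -⟩ := hβ
  have hβQ : IsIntegral ℚ β := hβint.tower_top
  have habsβ : |β| = β := abs_of_pos (zero_lt_one.trans hβ1)
  have hγβ : |γ| < |β| := by rwa [habsβ]
  have hαγ_lt : |α| < |γ| := by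
    refine h2.lt_of_ne fun h ↦ ?_
    rcases abs_eq_abs.1 h with rfl | rfl
    · exact hαγ rfl
    have hfac := minpoly.map_pow_eq_X_sub_C_mul_X_sub_C_mul_X_sub_C (n := 1) hβQ hdeg.le hαroot
      hγroot (pow_ne_pow_of_abs_lt (abs_neg γ ▸ hγβ) one_ne_zero).symm
      (pow_ne_pow_of_abs_lt hγβ one_ne_zero).symm (by simpa using hαγ)
    simp only [pow_one] at hfac
    have := minpoly.natDegree_eq_one_of_map_eq hfac
    omega
  intro n hn
  have hn0 : n ≠ 0 := by omega
  have hfac := minpoly.map_pow_eq_X_sub_C_mul_X_sub_C_mul_X_sub_C hβQ hdeg.le hαroot hγroot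
    (pow_ne_pow_of_abs_lt (h2.trans_lt hγβ) hn0).symm
    (pow_ne_pow_of_abs_lt hγβ hn0).symm (pow_ne_pow_of_abs_lt hαγ_lt hn0)
  refine not_isParry_of_lt_abs_coeff_zero (hβint.pow n) ?_
  rw [intCast_coeff_minpoly (hβint.pow n), ← coeff_map, hfac,
    coeff_zero_X_sub_C_mul_X_sub_C_mul_X_sub_C, abs_neg, abs_mul, abs_mul, abs_pow, abs_pow,
    abs_pow, habsβ, mul_assoc]
  exact lt_mul_of_one_lt_right (pow_pos (zero_lt_one.trans hβ1) n)
    (one_lt_mul_of_lt_of_le (one_lt_pow₀ h1 hn0) (one_lt_pow₀ (h1.trans hαγ_lt) hn0).le)
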